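/- (Implicit gradient accuracy.) Let f : ℝ^d → ℝ be B-Lipschitz and L-smooth, and ĝ : ℝ^d → ℝ have ρ-Lipschitz Hessian, with λ > 0 such that λI + ∇²ĝ(x) ⪰ μI for all x. Let φ* ∈ ℝ^d and define the exact implicit gradient d* := (I + (1/λ)∇²ĝ(φ*))⁻¹ ∇f(φ*). Suppose φ satisfies ‖φ - φ*‖ ≤ δ with δ < μ/(2ρ), and g satisfies ‖g - (I + (1/λ)∇²ĝ(φ))⁻¹ ∇f(φ)‖ ≤ δ'. Then ‖g - d*‖ ≤ (2λρB/μ² + λL/μ)δ + δ'. -/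

import Mathlib

/-!
Write `T x = 1 + λ⁻¹ ∇²ĝ(x)`. Since `λ + ∇²ĝ(x) ⪰ μ`, `T x` is coercive with constant `μ / λ`, hence
invertible with `‖(T x)⁻¹‖ ≤ λ / μ`. The resolvent identity
`(T φ)⁻¹ - (T φ*)⁻¹ = (T φ)⁻¹ (T φ* - T φ) (T φ*)⁻¹` together with `‖T φ* - T φ‖ ≤ ρ δ / λ` then
gives `‖(T φ)⁻¹ ∇f(φ) - (T φ*)⁻¹ ∇f(φ*)‖ ≤ (λ / μ) L δ + (λ / μ)² (ρ δ / λ) B`, and the triangle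
inequality through `(T φ)⁻¹ ∇f(φ)` adds `δ'`.
-/

open scoped InnerProductSpace RealInnerProductSpace NNReal Ring

namespace ContinuousLinearMap

variable {𝕜 E : Type*} [NormedAddCommGroup E]

section NormedSpace

variable [NontriviallyNormedField 𝕜] [NormedSpace 𝕜 E]

theorem norm_inverse_le_of_antilipschitz {f : E →L[𝕜] E} (hf : IsUnit f)
    {K : ℝ≥0} (hK : AntilipschitzWith K f) : ‖f⁻¹ʳ‖ ≤ K :=
  opNorm_le_bound _ K.coe_nonneg fun w ↦ by
    have hw : f (f⁻¹ʳ w) = w := by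
      change (f * f⁻¹ʳ) w = w
      rw [Ring.mul_inverse_cancel f hf]
      rfl
    simpa only [hw] using bound_of_antilipschitz f hK (f⁻¹ʳ w)

theorem norm_inverse_apply_sub_inverse_apply_le {a b : E →L[𝕜] E}
    (ha : IsUnit a) (hb : IsUnit b) {K : ℝ} (haK : ‖a⁻¹ʳ‖ ≤ K) (hbK : ‖b⁻¹ʳ‖ ≤ K) (x y : E) :
    ‖a⁻¹ʳ x - b⁻¹ʳ y‖ ≤ K * ‖x - y‖ + K ^ 2 * ‖b - a‖ * ‖y‖ := by
  have hK : 0 ≤ K := (norm_nonneg _).trans haK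
  have hresolvent : ‖a⁻¹ʳ - b⁻¹ʳ‖ ≤ K ^ 2 * ‖b - a‖ := by
    rw [Ring.inverse_sub_inverse (iff_of_true ha hb)]
    calc ‖a⁻¹ʳ * (b - a) * b⁻¹ʳ‖ ≤ ‖a⁻¹ʳ‖ * ‖b - a‖ * ‖b⁻¹ʳ‖ := norm_mul₃_le
      _ ≤ K * ‖b - a‖ * K := by gcongr
      _ = K ^ 2 * ‖b - a‖ := by ring
  calc ‖a⁻¹ʳ x - b⁻¹ʳ y‖ = ‖a⁻¹ʳ (x - y) + (a⁻¹ʳ - b⁻¹ʳ) y‖ := by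
        rw [map_sub, sub_apply, sub_add_sub_cancel]
    _ ≤ ‖a⁻¹ʳ‖ * ‖x - y‖ + ‖a⁻¹ʳ - b⁻¹ʳ‖ * ‖y‖ :=
        norm_add_le_of_le (le_opNorm _ _) (le_opNorm _ _)
    _ ≤ K * ‖x - y‖ + K ^ 2 * ‖b - a‖ * ‖y‖ := by gcongr

end NormedSpace

theorem norm_inverse_le_of_forall_le_norm_inner_map [RCLike 𝕜] [InnerProductSpace 𝕜 E]
    [CompleteSpace E] (f : E →L[𝕜] E) {c : ℝ≥0} (hc : 0 < c) (h : ∀ x, ‖x‖ ^ 2 * c ≤ ‖⟪f x, x⟫_𝕜‖) :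
    ‖f⁻¹ʳ‖ ≤ (c : ℝ)⁻¹ := by
  simpa only [NNReal.coe_inv] using norm_inverse_le_of_antilipschitz
    (isUnit_of_forall_le_norm_inner_map f hc h) (antilipschitz_of_forall_le_inner_map f hc h)

end ContinuousLinearMap

theorem stmt_7_general {d : ℕ}
    (f : EuclideanSpace ℝ (Fin d) → ℝ)
    (B L ρ lam μ δ δ' : ℝ)
    (hB : 0 ≤ B) (hL : 0 ≤ L) (hρ : 0 < ρ) (hlam : 0 < lam) (hμ : 0 < μ)
    (hδ0 : 0 ≤ δ)
    (hfB : ∀ x : EuclideanSpace ℝ (Fin d), ‖gradient f x‖ ≤ B)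
    (hfL : ∀ x y : EuclideanSpace ℝ (Fin d),
      ‖gradient f x - gradient f y‖ ≤ L * ‖x - y‖)
    (H : EuclideanSpace ℝ (Fin d) →
      EuclideanSpace ℝ (Fin d) →L[ℝ] EuclideanSpace ℝ (Fin d))
    (hHLip : ∀ x y : EuclideanSpace ℝ (Fin d), ‖H x - H y‖ ≤ ρ * ‖x - y‖)
    (hsc : ∀ (x v : EuclideanSpace ℝ (Fin d)),
      μ * ‖v‖ ^ 2 ≤ ⟪(lam • (1 : EuclideanSpace ℝ (Fin d) →L[ℝ] EuclideanSpace ℝ (Fin d)) + H x) v, v⟫)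
    (φstar φ gvec : EuclideanSpace ℝ (Fin d))
    (hclose : ‖φ - φstar‖ ≤ δ)
    (hg : ‖gvec - Ring.inverse
        ((1 : EuclideanSpace ℝ (Fin d) →L[ℝ] EuclideanSpace ℝ (Fin d)) + (1 / lam) • H φ)
        (gradient f φ)‖ ≤ δ') :
    ‖gvec - Ring.inverse
        ((1 : EuclideanSpace ℝ (Fin d) →L[ℝ] EuclideanSpace ℝ (Fin d)) + (1 / lam) • H φstar)
        (gradient f φstar)‖ ≤
      (2 * lam * ρ * B / μ ^ 2 + lam * L / μ) * δ + δ' := by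
  set T : EuclideanSpace ℝ (Fin d) → EuclideanSpace ℝ (Fin d) →L[ℝ] EuclideanSpace ℝ (Fin d) :=
    fun x ↦ 1 + (1 / lam) • H x
  have hT_eq x : T x = (1 / lam) • (lam • 1 + H x) := by
    rw [smul_add, smul_smul, one_div_mul_cancel hlam.ne', one_smul]
  let c : ℝ≥0 := ⟨μ / lam, by positivity⟩
  have hc : 0 < c := NNReal.coe_pos.1 (div_pos hμ hlam)
  have hcoercive x v : ‖v‖ ^ 2 * c ≤ ‖⟪T x v, v⟫‖ := by
    rw [hT_eq, smul_apply, real_inner_smul_left, Real.norm_eq_abs]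
    refine le_trans ?_ (le_abs_self _)
    calc ‖v‖ ^ 2 * (μ / lam) = 1 / lam * (μ * ‖v‖ ^ 2) := by ring
      _ ≤ _ := by gcongr; exact hsc x v
  have hunit x : IsUnit (T x) :=
    (T x).isUnit_of_forall_le_norm_inner_map hc (hcoercive x)
  have hinv x : ‖(T x)⁻¹ʳ‖ ≤ lam / μ :=
    ((T x).norm_inverse_le_of_forall_le_norm_inner_map hc (hcoercive x)).trans_eq (inv_div μ lam)
  have hTdiff : ‖T φstar - T φ‖ ≤ 1 / lam * (ρ * δ) := by
    have hsub : T φstar - T φ = (1 / lam) • (H φstar - H φ) := by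
      rw [smul_sub, add_sub_add_left_eq_sub]
    rw [hsub, norm_smul, Real.norm_of_nonneg (by positivity)]
    gcongr
    exact (hHLip φstar φ).trans (by rw [norm_sub_rev]; gcongr)
  calc ‖gvec - (T φstar)⁻¹ʳ (gradient f φstar)‖
      ≤ ‖gvec - (T φ)⁻¹ʳ (gradient f φ)‖
        + ‖(T φ)⁻¹ʳ (gradient f φ) - (T φstar)⁻¹ʳ (gradient f φstar)‖ :=
        norm_sub_le_norm_sub_add_norm_sub _ _ _
    _ ≤ δ' + (lam / μ * (L * δ) + (lam / μ) ^ 2 * (1 / lam * (ρ * δ)) * B) := by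
        gcongr
        refine (ContinuousLinearMap.norm_inverse_apply_sub_inverse_apply_le (hunit φ)
          (hunit φstar) (hinv φ) (hinv φstar) _ _).trans ?_
        gcongr
        · exact (hfL φ φstar).trans (by gcongr)
        · exact hfB φstar
    _ ≤ (2 * lam * ρ * B / μ ^ 2 + lam * L / μ) * δ + δ' := by
        have hsum : lam / μ * (L * δ) + (lam / μ) ^ 2 * (1 / lam * (ρ * δ)) * B
            = (lam * ρ * B / μ ^ 2 + lam * L / μ) * δ := by
          field_simp
          ring
        have : 0 ≤ lam * ρ * B / μ ^ 2 * δ := by positivity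
        linear_combination hsum + this

/-- Implicit gradient accuracy (Lemma 2 of iMAML): approximation error of the
computed meta-gradient against the exact implicit gradient. -/
theorem stmt_7 {d : ℕ}
    (f g : EuclideanSpace ℝ (Fin d) → ℝ)
    (B L ρ lam μ δ δ' : ℝ)
    (hB : 0 ≤ B) (hL : 0 ≤ L) (hρ : 0 < ρ) (hlam : 0 < lam) (hμ : 0 < μ)
    (hδ0 : 0 ≤ δ) (hδ'0 : 0 ≤ δ')
    (hf : Differentiable ℝ f)
    (hfB : ∀ x : EuclideanSpace ℝ (Fin d), ‖gradient f x‖ ≤ B)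
    (hfL : ∀ x y : EuclideanSpace ℝ (Fin d),
      ‖gradient f x - gradient f y‖ ≤ L * ‖x - y‖)
    (H : EuclideanSpace ℝ (Fin d) →
      EuclideanSpace ℝ (Fin d) →L[ℝ] EuclideanSpace ℝ (Fin d))
    (hH : ∀ x, HasFDerivAt (gradient g) (H x) x)
    (hHsa : ∀ x, IsSelfAdjoint (H x))
    (hHLip : ∀ x y : EuclideanSpace ℝ (Fin d), ‖H x - H y‖ ≤ ρ * ‖x - y‖)
    (hsc : ∀ (x v : EuclideanSpace ℝ (Fin d)),
      μ * ‖v‖ ^ 2 ≤ ⟪(lam • (1 : EuclideanSpace ℝ (Fin d) →L[ℝ] EuclideanSpace ℝ (Fin d)) + H x) v, v⟫)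
    (φstar φ gvec : EuclideanSpace ℝ (Fin d))
    (hclose : ‖φ - φstar‖ ≤ δ) (hδ : δ < μ / (2 * ρ))
    (hg : ‖gvec - Ring.inverse
        ((1 : EuclideanSpace ℝ (Fin d) →L[ℝ] EuclideanSpace ℝ (Fin d)) + (1 / lam) • H φ)
        (gradient f φ)‖ ≤ δ') :
    ‖gvec - Ring.inverse
        ((1 : EuclideanSpace ℝ (Fin d) →L[ℝ] EuclideanSpace ℝ (Fin d)) + (1 / lam) • H φstar)
        (gradient f φstar)‖ ≤
      (2 * lam * ρ * B / μ ^ 2 + lam * L / μ) * δ + δ' :=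
  stmt_7_general f B L ρ lam μ δ δ' hB hL hρ hlam hμ hδ0 hfB hfL H hHLip hsc φstar φ gvec hclose hg
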